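/- Let (ψ_x)_{x∈S} be a family of vectors in the accessible space ℂ^(Fin (n+1) × Fin d) indexed by Boolean inputs x ∈ S ⊆ (Fin n → ZMod 2), and let U be a unitary matrix on the accessible space. Define φ_x = U *ᵥ (O_x *ᵥ ψ_x). Then the Gram matrices satisfy ⟨φ_x, φ_y⟩ = Σ_{i=0}^{n} (−1)^(x̂ i + ŷ i) * M_i[x,y] for all x, y ∈ S, where M_i are the component Gram matrices of the family (ψ_x); that is, one query step transforms the Gram matrix by M^{new}[x,y] = Σ_i E_i[x,y] * M_i[x,y] with E_i[x,y] = (−1)^(x̂ i + ŷ i). -/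
import Mathlib


open Matrix

noncomputable section

/-- Extend a Boolean input `x : Fin n → ZMod 2` to `x̂ : Fin (n+1) → ZMod 2`
with `x̂ 0 = 0` and `x̂ ⟨i+1⟩ = x i`. -/
def xhat {n : ℕ} (x : Fin n → ZMod 2) : Fin (n + 1) → ZMod 2 :=
  Fin.cons 0 x

/-- The oracle `O_x` on the accessible space. -/
def oracle {n d : ℕ} (x : Fin n → ZMod 2) :
    Matrix (Fin (n + 1) × Fin d) (Fin (n + 1) × Fin d) ℂ :=
  Matrix.diagonal fun p => (-1 : ℂ) ^ (xhat x p.1).val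

/-- The standard inner product on `ι → ℂ`, conjugate-linear in the first argument. -/
def cinner {ι : Type*} [Fintype ι] (v w : ι → ℂ) : ℂ :=
  ∑ i, (starRingEnd ℂ) (v i) * w i

lemma cinner_eq_dot {ι : Type*} [Fintype ι] (v w : ι → ℂ) :
    cinner v w = star v ⬝ᵥ w := by
  simp [cinner, dotProduct, Pi.star_apply]

lemma cinner_mulVec {ι : Type*} [Fintype ι] [DecidableEq ι]
    (U : Matrix ι ι ℂ) (hU : Uᴴ * U = 1) (v w : ι → ℂ) :
    cinner (U *ᵥ v) (U *ᵥ w) = cinner v w := by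
  rw [cinner_eq_dot, cinner_eq_dot, star_mulVec, dotProduct_mulVec,
    vecMul_vecMul, hU, vecMul_one]

/-- One query step `φ_x = U *ᵥ (O_x *ᵥ ψ_x)`, with `U` unitary, transforms the Gram matrix
by `M^{new}[x,y] = Σ_i E_i[x,y] * M_i[x,y]` with `E_i[x,y] = (−1)^(x̂ i + ŷ i)`, where
`M_i[x,y] = Σ_w conj(ψ_x(i,w)) * ψ_y(i,w)` are the component Gram matrices. -/
theorem gram_one_query_step {n d : ℕ}
    (S : Finset (Fin n → ZMod 2))
    (ψ : (Fin n → ZMod 2) → (Fin (n + 1) × Fin d) → ℂ)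
    (U : Matrix (Fin (n + 1) × Fin d) (Fin (n + 1) × Fin d) ℂ)
    (hU : Uᴴ * U = 1)
    (φ : (Fin n → ZMod 2) → (Fin (n + 1) × Fin d) → ℂ)
    (hφ : ∀ x, φ x = U *ᵥ (oracle x *ᵥ ψ x)) :
    ∀ x ∈ S, ∀ y ∈ S,
      cinner (φ x) (φ y) =
        ∑ i : Fin (n + 1),
          ((-1 : ℂ) ^ ((xhat x i).val + (xhat y i).val)) *
            ∑ w : Fin d, (starRingEnd ℂ) (ψ x (i, w)) * ψ y (i, w) := by
  intro x hx y hy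
  rw [hφ x, hφ y, cinner_mulVec U hU]
  unfold cinner oracle
  rw [Fintype.sum_prod_type]
  refine Finset.sum_congr rfl fun i _ => ?_
  rw [Finset.mul_sum]
  refine Finset.sum_congr rfl fun w _ => ?_
  rw [mulVec_diagonal, mulVec_diagonal, _root_.map_mul]
  have : (starRingEnd ℂ) ((-1 : ℂ) ^ (xhat x (i, w).1).val) =
      (-1 : ℂ) ^ (xhat x (i, w).1).val := by
    simp
  rw [this, pow_add]
  ring

end
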